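/- Let H be a Hilbert space and L1, L2, L3, L4 closed subspaces of H. If L1 ⊥ (L2 ∨ L3) | L4, then L1 ⊥ L2 | (L3 ∨ L4) (weak union property of conditional orthogonality). -/

import Mathlib

open scoped InnerProductSpace

/-- Conditional orthogonality: `L1 ⊥ L2 | L3`. -/
def CondOrth {H : Type*} [NormedAddCommGroup H] [InnerProductSpace ℂ H]
    (L1 L2 L3 : Submodule ℂ H) [CompleteSpace L3] : Prop :=
  ∀ x ∈ L1, ∀ y ∈ L2,
    ⟪x - (Submodule.orthogonalProjection L3 x : H), y - (Submodule.orthogonalProjection L3 y : H)⟫_ℂ = 0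

set_option synthInstance.maxHeartbeats 1000000 in
/-- Weak union property of conditional orthogonality:
if `L1 ⊥ (L2 ∨ L3) | L4` then `L1 ⊥ L2 | (L3 ∨ L4)`. -/
theorem condOrth_weakUnion {H : Type*} [NormedAddCommGroup H] [InnerProductSpace ℂ H]
    [CompleteSpace H] (L1 L2 L3 L4 : Submodule ℂ H)
    (h1 : IsClosed (L1 : Set H)) (h2 : IsClosed (L2 : Set H))
    (h3 : IsClosed (L3 : Set H)) (h4 : IsClosed (L4 : Set H))
    [CompleteSpace L4]
    (h : CondOrth L1 ((L2 ⊔ L3).topologicalClosure) L4) :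
    CondOrth L1 L2 ((L3 ⊔ L4).topologicalClosure) := by
  intro x hx y hy
  set M := (L3 ⊔ L4).topologicalClosure with hM
  -- orthogonal of closure equals orthogonal
  have horth : Mᗮ = (L3 ⊔ L4)ᗮ := by
    rw [hM, ← Submodule.orthogonal_orthogonal_eq_closure,
      Submodule.orthogonal_orthogonal]
  -- x - P4 x is orthogonal to M
  have hxM : x - (Submodule.orthogonalProjection L4 x : H) ∈ Mᗮ := by
    rw [horth, ← Submodule.inf_orthogonal]
    constructor
    · -- orthogonal to L3
      intro u hu
      have h3' : u ∈ (L2 ⊔ L3).topologicalClosure :=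
        Submodule.le_topologicalClosure _ (le_sup_right (a := L2) hu)
      have key := h x hx u h3'
      have hP : (Submodule.orthogonalProjection L4 u : H) ∈ L4 := Submodule.coe_mem _
      have h0 : ⟪x - (Submodule.orthogonalProjection L4 x : H),
          (Submodule.orthogonalProjection L4 u : H)⟫_ℂ = 0 := by
        have : x - (Submodule.orthogonalProjection L4 x : H) ∈ L4ᗮ :=
          Submodule.sub_starProjection_mem_orthogonal (K := L4) x
        rw [Submodule.mem_orthogonal'] at this
        exact this _ hP
      have hkey : ⟪x - (Submodule.orthogonalProjection L4 x : H), u⟫_ℂ = 0 := by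
        rw [inner_sub_right, h0, sub_zero] at key
        exact key
      rw [← inner_conj_symm, hkey, map_zero]
    · -- orthogonal to L4
      intro u hu
      have h' : x - (Submodule.orthogonalProjection L4 x : H) ∈ L4ᗮ :=
        Submodule.sub_starProjection_mem_orthogonal (K := L4) x
      rw [Submodule.mem_orthogonal] at h'
      exact h' u hu
  -- hence the projection of x onto M equals its projection onto L4
  have hPx : (Submodule.orthogonalProjection M x : H) = (Submodule.orthogonalProjection L4 x : H) := by
    refine Submodule.eq_starProjection_of_mem_orthogonal ?_ hxM
    exact Submodule.le_topologicalClosure _ (le_sup_right (a := L3)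
      (Submodule.coe_mem _))
  rw [hPx]
  -- now compute the inner product
  have hPyM : (Submodule.orthogonalProjection M y : H) ∈ M := Submodule.coe_mem _
  have hMem : x - (Submodule.orthogonalProjection L4 x : H) ∈ Mᗮ := hxM
  rw [Submodule.mem_orthogonal'] at hMem
  have h0 : ⟪x - (Submodule.orthogonalProjection L4 x : H),
      (Submodule.orthogonalProjection M y : H)⟫_ℂ = 0 := hMem _ hPyM
  have hy' : y ∈ (L2 ⊔ L3).topologicalClosure :=
    Submodule.le_topologicalClosure _ (le_sup_left (b := L3) hy)
  have key := h x hx y hy'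
  have hPy4 : ⟪x - (Submodule.orthogonalProjection L4 x : H),
      (Submodule.orthogonalProjection L4 y : H)⟫_ℂ = 0 :=
    hMem _ (Submodule.le_topologicalClosure _ (le_sup_right (a := L3)
      (Submodule.coe_mem _)))
  have hyv : ⟪x - (Submodule.orthogonalProjection L4 x : H), y⟫_ℂ = 0 := by
    rw [inner_sub_right, hPy4, sub_zero] at key
    exact key
  rw [inner_sub_right, hyv, h0, sub_zero]
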